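/- arXiv:2503.06905 — 2 statements merged into one kernel-verified Lean document; each statement's English description precedes it below -/
import Mathlib

section
/- Let 𝒜 be a compatible collection of bounded subsets of a Banach space X and f₀ ∈ S_{X*}. Suppose that for any A ∈ 𝒜, β ≥ 0, and x₀ ∈ X with inf f₀(closure(A + βB_X)) > f₀(x₀), there exist finitely many closed balls B₁,…,B_n such that closure(A + βB_X) ⊆ closed convex hull of (B₁ ∪ … ∪ B_n) and x₀ ∉ closed convex hull of (B₁ ∪ … ∪ B_n). Then f₀ is a strong 𝒜-semi point of continuity of B_{X*}. -/
open Metric Set Pointwise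

variable {X : Type*} [NormedAddCommGroup X] [NormedSpace ℝ X]

/-- The seminorm `‖f‖_A = sup {|f x| : x ∈ A}` on the dual. -/
noncomputable def dualSeminormOn (A : Set X) (f : X →L[ℝ] ℝ) : ℝ :=
  sSup ((fun x => |f x|) '' A)

/-- The ball `B_A(f, ε)` for the seminorm `‖·‖_A`. -/
noncomputable def seminormBall (A : Set X) (f : X →L[ℝ] ℝ) (ε : ℝ) :
    Set (X →L[ℝ] ℝ) :=
  {g | dualSeminormOn A (g - f) < ε}

/-- `cone C = {λ • h : λ > 0, h ∈ C}`. -/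
def coneOf (C : Set (X →L[ℝ] ℝ)) : Set (X →L[ℝ] ℝ) :=
  {g | ∃ l : ℝ, 0 < l ∧ ∃ h ∈ C, g = l • h}

/-- A set of functionals is weak*-open if it is open in the weak* topology. -/
def IsWeakStarOpen (U : Set (X →L[ℝ] ℝ)) : Prop :=
  IsOpen (show Set (WeakDual ℝ X) from U)

/-- A compatible collection of bounded sets. -/
structure IsCompatible (𝒜 : Set (Set X)) : Prop where
  bounded : ∀ A ∈ 𝒜, Bornology.IsBounded A
  mem_of_subset : ∀ A ∈ 𝒜, ∀ C, C ⊆ A → C ∈ 𝒜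
  translate_mem : ∀ A ∈ 𝒜, ∀ x : X, ((fun a => a + x) '' A) ∈ 𝒜
  union_singleton_mem : ∀ A ∈ 𝒜, ∀ x : X, (A ∪ {x}) ∈ 𝒜
  closure_absConvexHull_mem : ∀ A ∈ 𝒜, closure (absConvexHull ℝ A) ∈ 𝒜

/-- `f₀` is an `𝒜`-semi point of continuity of `B_{X*}`. -/
def IsASemiPC (𝒜 : Set (Set X)) (f₀ : X →L[ℝ] ℝ) : Prop :=
  ∀ A ∈ 𝒜, ∀ ε > (0 : ℝ), ∃ U : Set (X →L[ℝ] ℝ), IsWeakStarOpen U ∧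
    (U ∩ closedBall 0 1).Nonempty ∧
    U ∩ closedBall 0 1 ⊆ coneOf (seminormBall A f₀ ε)

/-- `f₀` is a strong `𝒜`-semi point of continuity of `B_{X*}`. -/
def IsStrongASemiPC (𝒜 : Set (Set X)) (f₀ : X →L[ℝ] ℝ) : Prop :=
  ∀ A ∈ 𝒜, ∀ ε > (0 : ℝ), ∃ U : Set (X →L[ℝ] ℝ), IsWeakStarOpen U ∧
    (U ∩ closedBall 0 1).Nonempty ∧
    U ∩ closedBall 0 1 ⊆ seminormBall A f₀ ε

/-- A set is the closed convex hull of finitely many closed balls. -/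
def IsFinBallHull (S : Set X) : Prop :=
  ∃ (n : ℕ) (c : Fin n → X) (r : Fin n → ℝ),
    S = closure (convexHull ℝ (⋃ i, closedBall (c i) (r i)))

/-- `X` has `𝒜`-Property (II). -/
def HasAPropertyII (𝒜 : Set (Set X)) : Prop :=
  ∀ A ∈ 𝒜, IsClosed A → Convex ℝ A →
    ∃ ℱ : Set (Set X), (∀ S ∈ ℱ, IsFinBallHull S) ∧ A = ⋂₀ ℱ

/-- `X` has strong `𝒜`-Property (II). -/
def HasStrongAPropertyII (𝒜 : Set (Set X)) : Prop :=
  ∀ A ∈ 𝒜, Convex ℝ A → ∀ β : ℝ, 0 ≤ β →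
    ∃ ℱ : Set (Set X), (∀ S ∈ ℱ, IsFinBallHull S) ∧
      closure (A + β • closedBall (0 : X) 1) = ⋂₀ ℱ

/-!
Let `|f₀| ≤ M` on `A` and pick `z` with `f₀ z = 1`, `‖z‖ < 1 + η`. The part `K` of the closed
absolutely convex hull of `A ∪ {M • z}` lying in `ker f₀` belongs to `𝒜` and contains
`(a - f₀ a • z) / 2` for every `a ∈ A`. As `f₀ ≥ -1` on `K + B_X` while `f₀ x₀ = -(1 + η)` for
`x₀ = -(1 + η) • z`, the hypothesis puts `K + B_X` inside a hull `C` of finitely many balls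
missing `x₀`. Separating `x₀` from each ball with margin its radius is a weak*-open condition on
`g ∈ B_{X*}`, satisfied by a norm-one Hahn–Banach separator of `x₀` from `C`; every such `g` has
`g x₀ + ‖g‖ ≤ g k` on `K`, so `|g| ≤ (1 + η) g z - ‖g‖ ≤ 3η` on the symmetric set `K`. Together
with `g z ≈ 1` this gives `|g a - f₀ a| ≤ (M + 6) η` on `A`.
-/

lemma ContinuousLinearMap.exists_apply_eq_one_norm_lt {f : X →L[ℝ] ℝ} {R : ℝ}
    (hR : 1 < R * ‖f‖) : ∃ z : X, f z = 1 ∧ ‖z‖ < R := by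
  have hR₀ : 0 < R := pos_of_mul_pos_left (one_pos.trans hR) (norm_nonneg f)
  obtain ⟨x, hx, hfx⟩ := f.exists_lt_apply_of_lt_opNorm (r := R⁻¹) (by
    rwa [inv_lt_iff_one_lt_mul₀ hR₀, mul_comm])
  have hfx₀ : 0 < |f x| := (inv_pos.2 hR₀).trans hfx
  refine ⟨(f x)⁻¹ • x, by simp [(abs_pos.1 hfx₀)], ?_⟩
  rw [norm_smul, norm_inv, Real.norm_eq_abs, inv_mul_lt_iff₀ hfx₀]
  calc ‖x‖ < 1 := hx
    _ < |f x| * R := by rwa [← inv_lt_iff_one_lt_mul₀ hR₀, ← Real.norm_eq_abs]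

lemma ContinuousLinearMap.norm_le_of_forall_apply_le (g : X →L[ℝ] ℝ) {b : ℝ}
    (h : ∀ u ∈ closedBall (0 : X) 1, g u ≤ b) : ‖g‖ ≤ b := by
  rw [← g.sSup_unitClosedBall_eq_norm]
  refine csSup_le ((nonempty_closedBall.2 zero_le_one).image _) ?_
  rintro - ⟨u, hu, rfl⟩
  have hneg : g (-u) ≤ b := h (-u) (by simpa using hu)
  rw [map_neg] at hneg
  show |g u| ≤ b
  rw [abs_le]
  constructor <;> linarith [h u hu]

lemma ContinuousLinearMap.add_norm_mul_le_of_forall_closedBall (g : X →L[ℝ] ℝ) {c : X}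
    {r t : ℝ} (hr : 0 ≤ r) (h : ∀ y ∈ closedBall c r, t ≤ g y) : t + ‖g‖ * r ≤ g c := by
  rcases hr.eq_or_lt with rfl | hr
  · simpa using h c (mem_closedBall_self le_rfl)
  suffices ‖g‖ ≤ (g c - t) / r by rw [le_div_iff₀ hr] at this; linarith
  refine g.norm_le_of_forall_apply_le fun u hu => ?_
  have hmem : c - r • u ∈ closedBall c r := by
    rw [mem_closedBall_zero_iff] at hu
    rw [mem_closedBall, dist_eq_norm, sub_sub_cancel_left, norm_neg, norm_smul,
      Real.norm_of_nonneg hr.le]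
    exact mul_le_of_le_one_right hr.le hu
  have := h _ hmem
  rw [map_sub, map_smul, smul_eq_mul] at this
  rw [le_div_iff₀ hr]
  linarith

def closedBallHull {ι : Type*} (c : ι → X) (r : ι → ℝ) : Set X :=
  closure (convexHull ℝ (⋃ i, closedBall (c i) (r i)))

lemma ContinuousLinearMap.le_apply_of_mem_closedBallHull {ι : Type*}
    (g : X →L[ℝ] ℝ) {c : ι → X} {r : ι → ℝ} {t : ℝ}
    (h : ∀ i, 0 ≤ r i → t + ‖g‖ * r i ≤ g (c i)) {y : X}
    (hy : y ∈ closedBallHull c r) : t ≤ g y := by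
  have hclosed : IsClosed {y : X | t ≤ g y} := isClosed_le continuous_const g.continuous
  have hconvex : Convex ℝ {y : X | t ≤ g y} := convex_halfSpace_ge g.isLinear t
  refine closure_minimal (convexHull_min ?_ hconvex) hclosed hy
  simp only [iUnion_subset_iff]
  intro i x hx
  have hri : 0 ≤ r i := dist_nonneg.trans hx
  have hgx : g (c i) - g x ≤ ‖g‖ * r i := by
    rw [← map_sub]
    refine (le_abs_self _).trans ((g.le_opNorm _).trans ?_)
    rw [← dist_eq_norm, dist_comm]
    exact mul_le_mul_of_nonneg_left hx (norm_nonneg g)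
  show t ≤ g x
  linarith [h i hri]

lemma ContinuousLinearMap.neg_mul_norm_le_sInf_image_closure_add_smul_closedBall
    {f : X →L[ℝ] ℝ} {K : Set X} (hK : ∀ k ∈ K, f k = 0) {β : ℝ} (hβ : 0 ≤ β) :
    -(β * ‖f‖) ≤ sInf (f '' closure (K + β • closedBall (0 : X) 1)) := by
  have hsub : K + β • closedBall (0 : X) 1 ⊆ {y | -(β * ‖f‖) ≤ f y} := by
    rintro _ ⟨k, hk, _, ⟨v, hv, rfl⟩, rfl⟩
    rw [mem_closedBall_zero_iff] at hv
    have hfv : -‖f‖ ≤ f v := by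
      refine neg_le_of_abs_le ((f.le_opNorm v).trans ?_)
      exact mul_le_of_le_one_right (norm_nonneg f) hv
    simp only [mem_ofPred_eq, map_add, map_smul, smul_eq_mul, hK k hk, zero_add]
    nlinarith
  refine Real.le_sInf ?_ (by simpa using mul_nonneg hβ (norm_nonneg f))
  rintro _ ⟨y, hy, rfl⟩
  exact closure_minimal hsub (isClosed_le continuous_const f.continuous) hy

lemma dualSeminormOn_le {A : Set X} {f : X →L[ℝ] ℝ} {b : ℝ} (hb : 0 ≤ b)
    (h : ∀ a ∈ A, |f a| ≤ b) : dualSeminormOn A f ≤ b :=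
  Real.sSup_le (by rintro _ ⟨a, ha, rfl⟩; exact h a ha) hb

section BallSeparators

variable {ι : Type*} (c : ι → X) (r : ι → ℝ) (x₀ : X)

/-- For `‖g‖ ≤ 1` membership forces `g x₀ < g` on every ball `closedBall (c i) (r i)`, yet it
only constrains finitely many values of `g`, so it is a weak*-open condition. -/
def ballSeparators : Set (X →L[ℝ] ℝ) :=
  {g | ∀ i, 0 ≤ r i → g x₀ + r i < g (c i)}

lemma isWeakStarOpen_ballSeparators [Finite ι] : IsWeakStarOpen (ballSeparators c r x₀) := by
  have hset : ballSeparators c r x₀ = ⋂ i ∈ {i | 0 ≤ r i}, {g | g x₀ + r i < g (c i)} := by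
    ext g
    simp [ballSeparators]
  rw [IsWeakStarOpen, hset]
  exact (toFinite _).isOpen_biInter fun i _ =>
    isOpen_lt ((WeakDual.eval_continuous x₀).add continuous_const) (WeakDual.eval_continuous (c i))

variable {c r x₀}

lemma exists_norm_eq_one_mem_ballSeparators (hne : (closedBallHull c r).Nonempty)
    (hx₀ : x₀ ∉ closedBallHull c r) : ∃ h : X →L[ℝ] ℝ, ‖h‖ = 1 ∧ h ∈ ballSeparators c r x₀ := by
  obtain ⟨φ, u, hφx₀, hφC⟩ :=
    geometric_hahn_banach_point_closed (convex_convexHull ℝ _).closure isClosed_closure hx₀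
  obtain ⟨y, hy⟩ := hne
  have hφ : φ ≠ 0 := by
    rintro rfl
    have hy₀ := hφC y hy
    simp only [zero_apply] at hy₀ hφx₀
    linarith
  have hφpos : 0 < ‖φ‖ := norm_pos_iff.2 hφ
  refine ⟨‖φ‖⁻¹ • φ, norm_smul_inv_norm hφ, fun i hri => ?_⟩
  have hball : u + ‖φ‖ * r i ≤ φ (c i) :=
    φ.add_norm_mul_le_of_forall_closedBall hri fun y hy =>
      (hφC y (subset_closure (subset_convexHull ℝ _ (mem_iUnion_of_mem i hy)))).le
  simp only [smul_apply, smul_eq_mul]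
  calc ‖φ‖⁻¹ * φ x₀ + r i = ‖φ‖⁻¹ * (φ x₀ + ‖φ‖ * r i) := by field_simp
    _ < ‖φ‖⁻¹ * φ (c i) := by gcongr; linarith

lemma add_norm_le_of_mem_ballSeparators {g : X →L[ℝ] ℝ} (hg : ‖g‖ ≤ 1)
    (hgV : g ∈ ballSeparators c r x₀) {k : X} (hk : closedBall k 1 ⊆ closedBallHull c r) :
    g x₀ + ‖g‖ ≤ g k := by
  have hC : ∀ y ∈ closedBallHull c r, g x₀ ≤ g y := fun y hy =>
    g.le_apply_of_mem_closedBallHull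
      (fun i hri => by linarith [hgV i hri, mul_le_of_le_one_left hri hg]) hy
  simpa using g.add_norm_mul_le_of_forall_closedBall zero_le_one fun y hy => hC y (hk hy)

lemma abs_apply_le_of_mem_ballSeparators {g : X →L[ℝ] ℝ} (hg : ‖g‖ ≤ 1)
    (hgV : g ∈ ballSeparators c r x₀) {k : X} (hk : closedBall k 1 ⊆ closedBallHull c r)
    (hk' : closedBall (-k) 1 ⊆ closedBallHull c r) : |g k| ≤ -g x₀ - ‖g‖ := by
  have h₁ := add_norm_le_of_mem_ballSeparators hg hgV hk
  have h₂ := add_norm_le_of_mem_ballSeparators hg hgV hk'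
  rw [map_neg] at h₂
  rw [abs_le]
  constructor <;> linarith

end BallSeparators

lemma IsCompatible.exists_symmetric_subset_ker {𝒜 : Set (Set X)} (h𝒜 : IsCompatible 𝒜)
    {A : Set X} (hA : A ∈ 𝒜) {f : X →L[ℝ] ℝ} {M : ℝ} (hM : 0 < M) (hMA : ∀ a ∈ A, |f a| ≤ M)
    {z : X} (hfz : f z = 1) :
    ∃ K ∈ 𝒜, (∀ k ∈ K, f k = 0 ∧ -k ∈ K) ∧ (0 : X) ∈ K ∧
      ∀ a ∈ A, (2 : ℝ)⁻¹ • (a - f a • z) ∈ K := by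
  set S := absConvexHull ℝ (A ∪ {M • z})
  have hQ : Balanced ℝ (closure S) := balanced_absConvexHull.closure
  have hzS : M • z ∈ S := subset_absConvexHull (mem_union_right _ rfl)
  refine ⟨closure S ∩ {x | f x = 0}, h𝒜.mem_of_subset _ (h𝒜.closure_absConvexHull_mem _
    (h𝒜.union_singleton_mem A hA _)) _ inter_subset_left, ?_, ?_, fun a ha => ?_⟩
  · rintro k ⟨hkS, hk⟩
    exact ⟨hk, hQ.neg_mem_iff.2 hkS, by simp_all⟩
  · exact ⟨hQ.zero_mem ⟨_, subset_closure hzS⟩, map_zero f⟩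
  have hp : (-(f a) / M) • (M • z) ∈ S := by
    refine balanced_absConvexHull.smul_mem ?_ hzS
    rw [norm_div, norm_neg, Real.norm_eq_abs, Real.norm_of_nonneg hM.le]
    exact div_le_one_of_le₀ (hMA a ha) hM.le
  have hmid : (2 : ℝ)⁻¹ • a + (2 : ℝ)⁻¹ • ((-(f a) / M) • (M • z)) ∈ S :=
    convex_absConvexHull (subset_absConvexHull (mem_union_left _ ha)) hp
      (by norm_num) (by norm_num) (by norm_num)
  have heq : (2 : ℝ)⁻¹ • a + (2 : ℝ)⁻¹ • ((-(f a) / M) • (M • z)) =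
      (2 : ℝ)⁻¹ • (a - f a • z) := by
    rw [smul_smul (-(f a) / M), div_mul_cancel₀ _ hM.ne', neg_smul, smul_sub, sub_eq_add_neg,
      smul_neg]
  refine ⟨subset_closure (heq ▸ hmid), ?_⟩
  simp [hfz]

lemma ContinuousLinearMap.abs_sub_apply_le {f g : X →L[ℝ] ℝ} {z a : X} {η M : ℝ}
    (hg : ‖g‖ ≤ 1) (hz : ‖z‖ < 1 + η) (hη : η ≤ 1) (hgz : 1 - η < g z) (ha : |f a| ≤ M)
    (hdev : |g ((2 : ℝ)⁻¹ • (a - f a • z))| ≤ (1 + η) * g z - ‖g‖) :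
    |(g - f) a| ≤ (M + 6) * η := by
  rw [map_smul, smul_eq_mul, abs_mul, abs_of_pos (by norm_num : (0 : ℝ) < 2⁻¹)] at hdev
  have hgz_le : g z ≤ ‖g‖ * ‖z‖ := (le_abs_self _).trans (g.le_opNorm z)
  have hgz_le_norm : g z ≤ ‖g‖ + η := by nlinarith [norm_nonneg g, norm_nonneg z]
  have hgz_near : |g z - 1| ≤ η := by
    rw [abs_le]; constructor <;> nlinarith [norm_nonneg g, norm_nonneg z]
  have hslack : (1 + η) * g z - ‖g‖ ≤ 3 * η := by nlinarith
  have hsplit : (g - f) a = g (a - f a • z) + f a * (g z - 1) := by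
    simp only [sub_apply, map_sub, map_smul, smul_eq_mul]
    ring
  calc |(g - f) a| ≤ |g (a - f a • z)| + |f a| * |g z - 1| := by
        rw [hsplit, ← abs_mul]; exact abs_add_le _ _
    _ ≤ 2 * (3 * η) + M * η := by
        gcongr
        · linarith
        · exact (abs_nonneg _).trans ha
    _ = (M + 6) * η := by ring

theorem stmt7_general {X : Type*} [NormedAddCommGroup X] [NormedSpace ℝ X]
    (𝒜 : Set (Set X)) (h𝒜 : IsCompatible 𝒜)
    (f₀ : X →L[ℝ] ℝ) (hf₀ : ‖f₀‖ = 1)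
    (hsep : ∀ A ∈ 𝒜, ∀ β : ℝ, 0 ≤ β → ∀ x₀ : X,
      f₀ x₀ < sInf (f₀ '' closure (A + β • closedBall (0 : X) 1)) →
      ∃ (n : ℕ) (c : Fin n → X) (r : Fin n → ℝ),
        closure (A + β • closedBall (0 : X) 1) ⊆ closure (convexHull ℝ (⋃ i, closedBall (c i) (r i))) ∧
        x₀ ∉ closure (convexHull ℝ (⋃ i, closedBall (c i) (r i)))) :
    IsStrongASemiPC 𝒜 f₀ := by
  intro A hA ε hε
  obtain ⟨M, hM, hMA⟩ := (h𝒜.bounded A hA).exists_pos_norm_le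
  have hf₀A : ∀ a ∈ A, |f₀ a| ≤ M := fun a ha =>
    (f₀.le_opNorm a).trans (by rw [hf₀, one_mul]; exact hMA a ha)
  set η := min 1 (ε / (2 * (M + 6)))
  have hη : 0 < η := lt_min one_pos (by positivity)
  obtain ⟨z, hfz, hz⟩ := f₀.exists_apply_eq_one_norm_lt (R := 1 + η) (by rw [hf₀]; linarith)
  obtain ⟨K, hK, hKsymm, hK0, hAK⟩ := h𝒜.exists_symmetric_subset_ker hA hM hf₀A hfz
  set x₀ := -(1 + η) • z
  have hx₀ : f₀ x₀ < sInf (f₀ '' closure (K + (1 : ℝ) • closedBall (0 : X) 1)) := by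
    refine lt_of_lt_of_le ?_ (f₀.neg_mul_norm_le_sInf_image_closure_add_smul_closedBall
      (fun k hk => (hKsymm k hk).1) zero_le_one)
    simp [x₀, hfz, hf₀, hη]
  obtain ⟨n, c, r, hKC, hx₀C⟩ := hsep K hK 1 zero_le_one x₀ hx₀
  have hball : ∀ k ∈ K, closedBall k 1 ⊆ closedBallHull c r := fun k hk y hy =>
    hKC (subset_closure
      ⟨k, hk, y - k, by simpa [← dist_eq_norm, dist_comm] using hy, add_sub_cancel k y⟩)
  refine ⟨{g | 1 - η < g z} ∩ ballSeparators c r x₀, ?_, ?_, ?_⟩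
  · exact (isOpen_lt continuous_const (WeakDual.eval_continuous z)).inter
      (isWeakStarOpen_ballSeparators c r x₀)
  · obtain ⟨h, hh, hhV⟩ := exists_norm_eq_one_mem_ballSeparators
      ⟨0, hball 0 hK0 (mem_closedBall_self zero_le_one)⟩ hx₀C
    have hhz := add_norm_le_of_mem_ballSeparators hh.le hhV (hball 0 hK0)
    simp only [x₀, map_smul, smul_eq_mul, hh, map_zero] at hhz
    have hhz' : (1 + η) * (1 - η) < (1 + η) * h z := by nlinarith [mul_pos hη hη]
    exact ⟨h, ⟨lt_of_mul_lt_mul_left hhz' (by positivity), hhV⟩, by simp [hh]⟩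
  · rintro g ⟨⟨hgz, hgV⟩, hg⟩
    rw [mem_closedBall_zero_iff] at hg
    have hK : ∀ k ∈ K, |g k| ≤ (1 + η) * g z - ‖g‖ := fun k hk => by
      simpa [x₀] using abs_apply_le_of_mem_ballSeparators hg hgV (hball k hk)
        (hball (-k) (hKsymm k hk).2)
    refine (dualSeminormOn_le (by positivity) fun a ha => ContinuousLinearMap.abs_sub_apply_le
      hg hz (min_le_left _ _) hgz (hf₀A a ha) (hK _ (hAK a ha))).trans_lt ?_
    calc (M + 6) * η ≤ (M + 6) * (ε / (2 * (M + 6))) := by gcongr; exact min_le_right _ _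
      _ < ε := by field_simp; linarith

theorem stmt7 {X : Type*} [NormedAddCommGroup X] [NormedSpace ℝ X] [CompleteSpace X]
    (𝒜 : Set (Set X)) (h𝒜 : IsCompatible 𝒜)
    (f₀ : X →L[ℝ] ℝ) (hf₀ : ‖f₀‖ = 1)
    (hsep : ∀ A ∈ 𝒜, ∀ β : ℝ, 0 ≤ β → ∀ x₀ : X,
      f₀ x₀ < sInf (f₀ '' closure (A + β • closedBall (0 : X) 1)) →
      ∃ (n : ℕ) (c : Fin n → X) (r : Fin n → ℝ),
        closure (A + β • closedBall (0 : X) 1) ⊆ closure (convexHull ℝ (⋃ i, closedBall (c i) (r i))) ∧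
        x₀ ∉ closure (convexHull ℝ (⋃ i, closedBall (c i) (r i)))) :
    IsStrongASemiPC 𝒜 f₀ :=
  stmt7_general 𝒜 h𝒜 f₀ hf₀ hsep
end

section
/- Let X be a Banach space and let 𝒜 consist of all bounded subsets of X. If f₀ ∈ S_{X*} is an 𝒜-semi point of continuity of B_{X*}, then f₀ is a semi weak*-point of continuity of B_{X*}: for each ε > 0 there exists a nonempty weak*-open subset W of B_{X*} with W ⊆ B(f₀, ε) (norm ball in X*). -/
open Metric Set Pointwise

variable {X : Type*} [NormedAddCommGroup X] [NormedSpace ℝ X]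

/-! For `A` the closed unit ball, `B_A(f₀, θ)` is the norm ball `B(f₀, θ)`, and every `g` in its
cone satisfies `‖g - ‖g‖ • f₀‖ ≤ η ‖g‖` with `η = 2θ/(1-θ)`. The weak*-open set `U₀` given by the
hypothesis may meet `B_{X*}` only in short functionals, so rescale it by the norm `t` of one of
its points and cut it with the slice `{g | 1 - 2η < g x₀}`, where `1 - η < f₀ x₀`, `‖x₀‖ ≤ 1`.
The points of `B_{X*}` in the resulting weak*-open set lie in the cone and have norm `> 1 - 2η`,
so they are `3η`-close to `f₀`. -/

theorem seminormBall_closedBall_one (f : X →L[ℝ] ℝ) (θ : ℝ) :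
    seminormBall (closedBall (0 : X) 1) f θ = ball f θ := by
  ext g
  simp only [seminormBall, mem_ofPred_eq, mem_ball_iff_norm]
  exact iff_of_eq (congrArg (· < θ) (g - f).sSup_unitClosedBall_eq_norm)

theorem smul_mem_coneOf {C : Set (X →L[ℝ] ℝ)} {g : X →L[ℝ] ℝ} (hg : g ∈ coneOf C) {c : ℝ}
    (hc : 0 < c) : c • g ∈ coneOf C := by
  obtain ⟨l, hl, h, hh, rfl⟩ := hg
  exact ⟨c * l, mul_pos hc hl, h, hh, smul_smul c l h⟩

theorem ne_zero_of_mem_coneOf_ball {f₀ g : X →L[ℝ] ℝ} {θ : ℝ} (hθ : θ ≤ ‖f₀‖)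
    (hg : g ∈ coneOf (ball f₀ θ)) : g ≠ 0 := by
  obtain ⟨l, hl, h, hh, rfl⟩ := hg
  refine smul_ne_zero hl.ne' ?_
  rintro rfl
  rw [mem_ball_iff_norm, zero_sub, norm_neg] at hh
  exact hh.not_ge hθ

theorem norm_sub_norm_smul_le_of_mem_coneOf_ball {f₀ g : X →L[ℝ] ℝ} (hf₀ : ‖f₀‖ = 1)
    {θ η : ℝ} (hη : 0 ≤ η) (hθη : 2 * θ ≤ η * (1 - θ)) (hg : g ∈ coneOf (ball f₀ θ)) :
    ‖g - ‖g‖ • f₀‖ ≤ η * ‖g‖ := by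
  obtain ⟨μ, hμ, h, hh, rfl⟩ := hg
  have hhf₀ : ‖h - f₀‖ < θ := mem_ball_iff_norm.1 hh
  have hnorm : |1 - ‖h‖| ≤ ‖h - f₀‖ := by
    rw [abs_sub_comm, ← hf₀]; exact abs_norm_sub_norm_le h f₀
  have hh_low : 1 - θ ≤ ‖h‖ := by linarith [le_abs_self (1 - ‖h‖)]
  rw [norm_smul, Real.norm_of_nonneg hμ.le]
  calc ‖μ • h - (μ * ‖h‖) • f₀‖ = ‖μ • (h - f₀) + (μ * (1 - ‖h‖)) • f₀‖ := by
        congr 1; module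
    _ ≤ μ * ‖h - f₀‖ + μ * |1 - ‖h‖| := by
        refine (norm_add_le _ _).trans_eq ?_
        rw [norm_smul, norm_smul, hf₀, Real.norm_of_nonneg hμ.le, Real.norm_eq_abs,
          abs_mul, abs_of_pos hμ, mul_one]
    _ ≤ μ * (2 * θ) := by nlinarith
    _ ≤ μ * (η * (1 - θ)) := by gcongr
    _ ≤ η * (μ * ‖h‖) := by nlinarith [mul_nonneg hμ.le hη]

theorem mul_sub_le_apply_of_norm_sub_norm_smul_le {f₀ g : X →L[ℝ] ℝ} {η : ℝ}
    (hg : ‖g - ‖g‖ • f₀‖ ≤ η * ‖g‖) {x : X} (hx : ‖x‖ ≤ 1) : ‖g‖ * (f₀ x - η) ≤ g x := by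
  have h := (g - ‖g‖ • f₀).unit_le_opNorm x hx
  simp only [sub_apply, smul_apply, smul_eq_mul, Real.norm_eq_abs] at h
  linarith [neg_abs_le (g x - ‖g‖ * f₀ x)]

theorem norm_sub_lt_of_norm_sub_norm_smul_le {f₀ g : X →L[ℝ] ℝ} (hf₀ : ‖f₀‖ = 1) {η δ : ℝ}
    (hη : 0 ≤ η) (hg : ‖g - ‖g‖ • f₀‖ ≤ η * ‖g‖) (hg1 : ‖g‖ ≤ 1) (hgδ : 1 - δ < ‖g‖) :
    ‖g - f₀‖ < η + δ := by
  calc ‖g - f₀‖ = ‖(g - ‖g‖ • f₀) + (‖g‖ - 1) • f₀‖ := by congr 1; module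
    _ ≤ η * ‖g‖ + (1 - ‖g‖) := by
        refine (norm_add_le _ _).trans ?_
        rw [norm_smul, hf₀, mul_one, Real.norm_eq_abs, abs_sub_comm, abs_of_nonneg (by linarith)]
        linarith
    _ < η + δ := by nlinarith

theorem exists_norm_le_one_lt_apply (f : X →L[ℝ] ℝ) {r : ℝ} (hr : r < ‖f‖) :
    ∃ x : X, ‖x‖ ≤ 1 ∧ r < f x := by
  obtain ⟨x, hx, hrx⟩ := f.exists_lt_apply_of_lt_opNorm hr
  rcases le_total 0 (f x) with hfx | hfx
  · exact ⟨x, hx.le, by rwa [Real.norm_of_nonneg hfx] at hrx⟩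
  · exact ⟨-x, by rw [norm_neg]; exact hx.le, by rwa [Real.norm_of_nonpos hfx, ← map_neg] at hrx⟩

theorem IsWeakStarOpen.smul_preimage {U : Set (X →L[ℝ] ℝ)} (hU : IsWeakStarOpen U) (t : ℝ) :
    IsWeakStarOpen {g | t • g ∈ U} :=
  hU.preimage (continuous_const_smul (T := WeakDual ℝ X) t)

theorem isWeakStarOpen_lt_apply (c : ℝ) (x : X) : IsWeakStarOpen {g : X →L[ℝ] ℝ | c < g x} :=
  isOpen_lt continuous_const (WeakDual.eval_continuous x)

theorem exists_isWeakStarOpen_subset_ball_of_subset_coneOf_ball {f₀ : X →L[ℝ] ℝ}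
    (hf₀ : ‖f₀‖ = 1) {θ η : ℝ} (hη : 0 < η) (hθη : 2 * θ ≤ η * (1 - θ))
    {U₀ : Set (X →L[ℝ] ℝ)} (hU₀ : IsWeakStarOpen U₀) (hne : (U₀ ∩ closedBall 0 1).Nonempty)
    (hcone : U₀ ∩ closedBall 0 1 ⊆ coneOf (ball f₀ θ)) :
    ∃ U : Set (X →L[ℝ] ℝ), IsWeakStarOpen U ∧ (U ∩ closedBall 0 1).Nonempty ∧
      U ∩ closedBall 0 1 ⊆ ball f₀ (3 * η) := by
  have hdir : ∀ g ∈ coneOf (ball f₀ θ), ‖g - ‖g‖ • f₀‖ ≤ η * ‖g‖ := fun g hg =>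
    norm_sub_norm_smul_le_of_mem_coneOf_ball hf₀ hη.le hθη hg
  obtain ⟨x₀, hx₀, hfx₀⟩ := exists_norm_le_one_lt_apply f₀ (r := 1 - η) (by linarith)
  obtain ⟨g₁, hg₁⟩ := hne
  set t := ‖g₁‖
  have ht1 : t ≤ 1 := mem_closedBall_zero_iff.1 hg₁.2
  have ht0 : 0 < t := by
    refine norm_pos_iff.2 (ne_zero_of_mem_coneOf_ball ?_ (hcone hg₁))
    rw [hf₀]; by_contra! hθ; nlinarith
  refine ⟨{g | t • g ∈ U₀} ∩ {g | 1 - 2 * η < g x₀},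
    (hU₀.smul_preimage t).inter (isWeakStarOpen_lt_apply _ x₀), ⟨t⁻¹ • g₁, ⟨?_, ?_⟩, ?_⟩, ?_⟩
  · simpa only [mem_ofPred_eq, smul_smul, mul_inv_cancel₀ ht0.ne', one_smul] using hg₁.1
  · have := mul_sub_le_apply_of_norm_sub_norm_smul_le (hdir _ (hcone hg₁)) hx₀
    rw [mem_ofPred_eq, smul_apply, smul_eq_mul, lt_inv_mul_iff₀ ht0]
    nlinarith
  · rw [mem_closedBall_zero_iff, norm_smul, Real.norm_of_nonneg (inv_nonneg.2 ht0.le),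
      inv_mul_cancel₀ ht0.ne']
  · rintro g ⟨⟨hgU, hgx₀⟩, hg1⟩
    rw [mem_closedBall_zero_iff] at hg1
    have htg : t • g ∈ U₀ ∩ closedBall 0 1 := by
      refine ⟨hgU, mem_closedBall_zero_iff.2 ?_⟩
      rw [norm_smul, Real.norm_of_nonneg ht0.le]; nlinarith [norm_nonneg g]
    have hg : g ∈ coneOf (ball f₀ θ) := by
      simpa only [smul_smul, inv_mul_cancel₀ ht0.ne', one_smul] using
        smul_mem_coneOf (hcone htg) (inv_pos.2 ht0)
    have hgn : 1 - 2 * η < ‖g‖ := hgx₀.trans_le ((le_abs_self _).trans (g.unit_le_opNorm x₀ hx₀))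
    rw [mem_ball_iff_norm]
    linarith [norm_sub_lt_of_norm_sub_norm_smul_le hf₀ hη.le (hdir g hg) hg1 hgn]

theorem stmt10_general {X : Type*} [NormedAddCommGroup X] [NormedSpace ℝ X]
    (f₀ : X →L[ℝ] ℝ) (hf₀ : ‖f₀‖ = 1)
    (hpc : IsASemiPC {A : Set X | Bornology.IsBounded A} f₀) :
    ∀ ε > (0 : ℝ), ∃ U : Set (X →L[ℝ] ℝ), IsWeakStarOpen U ∧
      (U ∩ closedBall 0 1).Nonempty ∧
      U ∩ closedBall 0 1 ⊆ Metric.ball f₀ ε := by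
  intro ε hε
  obtain ⟨η, hη, rfl⟩ : ∃ η, 0 < η ∧ ε = 3 * η := ⟨ε / 3, by positivity, by ring⟩
  have hθη : 2 * (η / (η + 2)) ≤ η * (1 - η / (η + 2)) := by
    refine le_of_eq ?_; field_simp; ring
  obtain ⟨U₀, hU₀, hne, hcone⟩ := hpc _ isBounded_closedBall (η / (η + 2)) (by positivity)
  rw [seminormBall_closedBall_one] at hcone
  exact exists_isWeakStarOpen_subset_ball_of_subset_coneOf_ball hf₀ hη hθη hU₀ hne hcone

theorem stmt10 {X : Type*} [NormedAddCommGroup X] [NormedSpace ℝ X] [CompleteSpace X]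
    (f₀ : X →L[ℝ] ℝ) (hf₀ : ‖f₀‖ = 1)
    (hpc : IsASemiPC {A : Set X | Bornology.IsBounded A} f₀) :
    ∀ ε > (0 : ℝ), ∃ U : Set (X →L[ℝ] ℝ), IsWeakStarOpen U ∧
      (U ∩ closedBall 0 1).Nonempty ∧
      U ∩ closedBall 0 1 ⊆ Metric.ball f₀ ε :=
  stmt10_general f₀ hf₀ hpc
end
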